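/- Local null-controllability: let λ ∈ ℝ, A = λ·id + E on ℓ², and let ρ > 0. Then there exists δ > 0 (one may take δ = ρ√κ, where κ > 0 is the uniform lower bound of the Gramian W) such that for every y₀ ∈ ℓ² with ‖y₀‖₂ ≤ δ there exist T > 0 and a control f ∈ L²([0,T], ℓ²) with ∫₀ᵀ ‖f(t)‖₂² dt ≤ ρ² for which the mild solution y(t) = e^{tA}y₀ + e^{tA}∫₀ᵗ e^{-sA} f(s) ds of ẏ = Ay + f, y(0) = y₀, satisfies y(T) = 0. -/

import Mathlib

/-!
Since `A` is bounded, `e^{sA}` is defined for all real `s` and `e^{-sA} e^{sA} = 1`. The control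
`f(s) = -e^{sA} y₀` on `[0, 1]` therefore gives `∫₀¹ e^{-sA} f(s) ds = -y₀`, i.e. `y(1) = 0`, and
`‖f(s)‖ ≤ C ‖y₀‖` with `C` a bound for `‖e^{sA}‖` on `[0, 1]`; so `δ = ρ / C` works.
-/

open scoped ENNReal
open MeasureTheory Filter

noncomputable section

/-- The real Hilbert space `ℓ²` of square-summable real sequences. -/
abbrev ell2 : Type := lp (fun _ : ℕ => ℝ) 2

lemma shift_memℓp (y : ell2) : Memℓp (fun n => y (n + 1)) 2 := by
  have h : Summable fun n : ℕ => ‖y n‖ ^ (2 : ℝ≥0∞).toReal :=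
    (memℓp_gen_iff (by norm_num)).mp (lp.memℓp y)
  exact memℓp_gen (h.comp_injective (add_left_injective 1))

/-- The left shift operator `E : ℓ² → ℓ²`, `(Ey)ₙ = yₙ₊₁`. -/
def shiftE : ell2 →L[ℝ] ell2 :=
  LinearMap.mkContinuous
    { toFun := fun y => ⟨fun n => y (n + 1), shift_memℓp y⟩
      map_add' := fun y z => by
        ext n
        simp [lp.coeFn_add] <;> rfl
      map_smul' := fun c y => by
        ext n
        simp [lp.coeFn_smul] }
    1
    (fun y => by
      rw [one_mul]
      have h2 : (0:ℝ) < (2 : ℝ≥0∞).toReal := by norm_num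
      have hy := lp.norm_rpow_eq_tsum h2 y
      have hEy := lp.norm_rpow_eq_tsum h2 (⟨fun n => y (n + 1), shift_memℓp y⟩ : ell2)
      have hle : (∑' n : ℕ, ‖y (n + 1)‖ ^ (2 : ℝ≥0∞).toReal)
          ≤ ∑' n : ℕ, ‖y n‖ ^ (2 : ℝ≥0∞).toReal := by
        have hs : Summable fun n : ℕ => ‖y n‖ ^ (2 : ℝ≥0∞).toReal :=
          (memℓp_gen_iff h2).mp (lp.memℓp y)
        exact tsum_comp_le_tsum_of_inj hs (fun n => by positivity)
          (add_left_injective 1)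
      have key : ‖(⟨fun n => y (n + 1), shift_memℓp y⟩ : ell2)‖ ^ (2 : ℝ≥0∞).toReal
          ≤ ‖y‖ ^ (2 : ℝ≥0∞).toReal := by
        rw [hy, hEy]; exact hle
      exact (Real.rpow_le_rpow_iff
        (norm_nonneg ((⟨fun n => y (n + 1), shift_memℓp y⟩ : ell2))) (norm_nonneg y) h2).mp key)

/-- The operator `A = λ·id + E` on `ℓ²`. -/
def opA (lam : ℝ) : ell2 →L[ℝ] ell2 :=
  lam • ContinuousLinearMap.id ℝ ell2 + shiftE

section NullControl

open NormedSpace Set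

variable {E : Type*} [NormedAddCommGroup E] [NormedSpace ℝ E]

def nullControl (A : E →L[ℝ] E) (y₀ : E) (s : ℝ) : E :=
  -exp (s • A) y₀

theorem norm_nullControl_le (A : E →L[ℝ] E) (y₀ : E) (s : ℝ) :
    ‖nullControl A y₀ s‖ ≤ ‖exp (s • A)‖ * ‖y₀‖ := by
  rw [nullControl, norm_neg]
  exact (exp (s • A)).le_opNorm y₀

variable [CompleteSpace E]

local instance : NormedAlgebra ℚ (E →L[ℝ] E) := NormedAlgebra.restrictScalars ℚ ℝ _

theorem continuous_exp_smul (A : E →L[ℝ] E) : Continuous fun s : ℝ => exp (s • A) :=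
  exp_continuous.comp (continuous_id.smul continuous_const)

theorem exp_neg_smul_apply_exp_smul_apply (A : E →L[ℝ] E) (s : ℝ) (x : E) :
    exp ((-s) • A) (exp (s • A) x) = x := by
  have hcomm : Commute ((-s) • A) (s • A) := ((Commute.refl A).smul_left _).smul_right _
  change (exp ((-s) • A) * exp (s • A)) x = x
  rw [← exp_add_of_commute hcomm, neg_smul, neg_add_cancel, exp_zero]
  rfl

theorem exists_pos_norm_exp_smul_le (A : E →L[ℝ] E) :
    ∃ C, 0 < C ∧ ∀ s ∈ Icc (0 : ℝ) 1, ‖exp (s • A)‖ ≤ C := by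
  obtain ⟨C, hC⟩ := isCompact_Icc.exists_bound_of_continuousOn (continuous_exp_smul A).continuousOn
  exact ⟨max C 1, by positivity, fun s hs => (hC s hs).trans (le_max_left _ _)⟩

theorem continuous_nullControl (A : E →L[ℝ] E) (y₀ : E) : Continuous (nullControl A y₀) :=
  ((continuous_exp_smul A).clm_apply continuous_const).neg

theorem exp_apply_add_exp_apply_integral_nullControl (A : E →L[ℝ] E) (y₀ : E) :
    exp ((1 : ℝ) • A) y₀ +
      exp ((1 : ℝ) • A) (∫ s in (0 : ℝ)..1, exp ((-s) • A) (nullControl A y₀ s)) = 0 := by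
  have hint : (∫ s in (0 : ℝ)..1, exp ((-s) • A) (nullControl A y₀ s)) = -y₀ := by
    simp only [nullControl, map_neg, exp_neg_smul_apply_exp_smul_apply]
    simp
  rw [hint, map_neg, add_neg_cancel]

end NullControl

section SquareIntegral

variable {F : Type*} [NormedAddCommGroup F]

theorem intervalIntegral_norm_sq_le {f : ℝ → F} (hf : Continuous f) {T M : ℝ} (hT : 0 ≤ T)
    (hM : ∀ t ∈ Set.Icc 0 T, ‖f t‖ ≤ M) : ∫ t in (0 : ℝ)..T, ‖f t‖ ^ 2 ≤ T * M ^ 2 := by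
  have hmono := intervalIntegral.integral_mono_on (μ := volume) hT
    ((hf.norm.pow 2).intervalIntegrable 0 T) intervalIntegrable_const fun t ht => pow_le_pow_left₀ (norm_nonneg _) (hM t ht) 2
  simpa using hmono

theorem memLp_restrict_Icc_of_norm_le {f : ℝ → F} (hf : Continuous f) {p : ℝ≥0∞} {a b M : ℝ}
    (hM : ∀ t ∈ Set.Icc a b, ‖f t‖ ≤ M) : MemLp f p (volume.restrict (Set.Icc a b)) :=
  MemLp.of_bound hf.aestronglyMeasurable M <|
    (ae_restrict_mem measurableSet_Icc).mono fun t ht => hM t ht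

end SquareIntegral

/-- Local null-controllability: for every `λ ∈ ℝ` and `ρ > 0` there is `δ > 0` such that
from every `y₀` with `‖y₀‖₂ ≤ δ` the system `ẏ = Ay + f` can be steered to `0` in some
time `T > 0` by an admissible control `f ∈ L²([0,T], ℓ²)` with `∫₀^T ‖f‖₂² dt ≤ ρ²`. -/
theorem stmt16 (lam ρ : ℝ) (hρ : 0 < ρ) :
    ∃ δ : ℝ, 0 < δ ∧ ∀ y0 : ell2, ‖y0‖ ≤ δ →
      ∃ (T : ℝ) (f : ℝ → ell2), 0 < T ∧
        MemLp f 2 (volume.restrict (Set.Icc (0:ℝ) T)) ∧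
        (∫ t in (0:ℝ)..T, ‖f t‖ ^ 2) ≤ ρ ^ 2 ∧
        NormedSpace.exp (T • opA lam) y0 +
          NormedSpace.exp (T • opA lam)
            (∫ s in (0:ℝ)..T, NormedSpace.exp ((-s) • opA lam) (f s)) = 0 := by
  obtain ⟨C, hC, hexp⟩ := exists_pos_norm_exp_smul_le (opA lam)
  refine ⟨ρ / C, div_pos hρ hC, fun y0 hy0 => ⟨1, nullControl (opA lam) y0, one_pos, ?_⟩⟩
  have hcont := continuous_nullControl (opA lam) y0
  have hbound : ∀ s ∈ Set.Icc (0 : ℝ) 1, ‖nullControl (opA lam) y0 s‖ ≤ ρ := fun s hs =>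
    calc ‖nullControl (opA lam) y0 s‖ ≤ ‖NormedSpace.exp (s • opA lam)‖ * ‖y0‖ :=
          norm_nullControl_le _ _ _
      _ ≤ C * (ρ / C) := by gcongr; exact hexp s hs
      _ = ρ := mul_div_cancel₀ ρ hC.ne'
  refine ⟨memLp_restrict_Icc_of_norm_le hcont hbound, ?_,
    exp_apply_add_exp_apply_integral_nullControl _ _⟩
  simpa using intervalIntegral_norm_sq_le hcont zero_le_one hbound

end
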